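/- Let V be a finite-dimensional real vector space, W ⊆ V a linear subspace of codimension one, g : ℝ → Sym²(V*) a differentiable family of positive definite symmetric bilinear forms, K : ℝ → Sym²(V*) a differentiable family of symmetric bilinear forms, and ν : ℝ → V a differentiable curve with g(t)(ν(t),ν(t)) = 1, g(t)(ν(t),w) = 0 for all w ∈ W and all t, and V = ℝ·ν(t) ⊕ W for all t. Fix t₀, write h = g'(t₀), L = K'(t₀), and let u ∈ W be the unique vector with g(t₀)(u,x) = h(ν(t₀),x) for all x ∈ W. Then for every w ∈ W: (d/dt)|_{t₀} [K(t)(ν(t), w)] = L(ν(t₀),w) − K(t₀)(u,w) − (1/2)·h(ν(t₀),ν(t₀))·K(t₀)(ν(t₀),w). (In index notation: D(ω^⊥_A)[h,L] = L_{νA} − K_{AB}h^B_ν − (1/2)K_{Aν}h_{νν}.) -/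
import Mathlib


/-- First variation of the boundary datum `ω⊥_A = K(ν, ∂_A)`:
`d/dt K(t)(ν(t), w) = L(ν,w) - K(u,w) - (1/2) h(ν,ν) K(ν,w)` at `t₀`, where
`h = g'(t₀)`, `L = K'(t₀)` and `u ∈ W` is the `g t₀`-dual in `W` of `h(ν t₀, ·)|_W`. -/
theorem stmt_1 {V : Type*} [NormedAddCommGroup V] [NormedSpace ℝ V] [FiniteDimensional ℝ V]
    (W : Submodule ℝ V)
    (hcodim : Module.finrank ℝ W + 1 = Module.finrank ℝ V)
    (g g' K K' : ℝ → (V →L[ℝ] V →L[ℝ] ℝ)) (ν ν' : ℝ → V)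
    (hgsymm : ∀ t x y, g t x y = g t y x)
    (hgpos : ∀ t, ∀ v : V, v ≠ 0 → 0 < g t v v)
    (hKsymm : ∀ t x y, K t x y = K t y x)
    (hg : ∀ t, HasDerivAt g (g' t) t)
    (hK : ∀ t, HasDerivAt K (K' t) t)
    (hν : ∀ t, HasDerivAt ν (ν' t) t)
    (hunit : ∀ t, g t (ν t) (ν t) = 1)
    (horth : ∀ t, ∀ w ∈ W, g t (ν t) w = 0)
    (hsplit : ∀ t, IsCompl (Submodule.span ℝ {ν t}) W)
    (t₀ : ℝ) (u : V) (huW : u ∈ W)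
    (hu : ∀ x ∈ W, g t₀ u x = g' t₀ (ν t₀) x) :
    ∀ w ∈ W, HasDerivAt (fun t => K t (ν t) w)
      (K' t₀ (ν t₀) w - K t₀ u w
        - (1/2) * g' t₀ (ν t₀) (ν t₀) * K t₀ (ν t₀) w) t₀ := by
  intro w hw
  set c : ℝ := (1/2) * g' t₀ (ν t₀) (ν t₀) with hc
  -- derivative of t ↦ g t (ν t)
  have hgν : HasDerivAt (fun t => g t (ν t)) (g' t₀ (ν t₀) + g t₀ (ν' t₀)) t₀ :=
    (hg t₀).clm_apply (hν t₀)
  -- differentiate the unit-norm constraint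
  have h1 : HasDerivAt (fun t => g t (ν t) (ν t))
      ((g' t₀ (ν t₀) + g t₀ (ν' t₀)) (ν t₀) + g t₀ (ν t₀) (ν' t₀)) t₀ :=
    hgν.clm_apply (hν t₀)
  have h1' : (fun t => g t (ν t) (ν t)) = fun _ => (1:ℝ) := funext hunit
  rw [h1'] at h1
  have e1 : g' t₀ (ν t₀) (ν t₀) + g t₀ (ν' t₀) (ν t₀) + g t₀ (ν t₀) (ν' t₀) = 0 := by
    have := h1.unique (hasDerivAt_const t₀ 1)
    simpa [ContinuousLinearMap.add_apply, add_assoc] using this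
  have e1' : g t₀ (ν' t₀) (ν t₀) = -c := by
    have hs : g t₀ (ν t₀) (ν' t₀) = g t₀ (ν' t₀) (ν t₀) := hgsymm _ _ _
    rw [hs] at e1
    rw [hc]; linarith
  -- differentiate the orthogonality constraint, for each x ∈ W
  have e2 : ∀ x ∈ W, g t₀ (ν' t₀) x = - g t₀ u x := by
    intro x hx
    have h2 : HasDerivAt (fun t => g t (ν t) x)
        ((g' t₀ (ν t₀) + g t₀ (ν' t₀)) x + g t₀ (ν t₀) 0) t₀ :=
      hgν.clm_apply (hasDerivAt_const t₀ x)
    have h2' : (fun t => g t (ν t) x) = fun _ => (0:ℝ) :=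
      funext fun t => horth t x hx
    rw [h2'] at h2
    have := h2.unique (hasDerivAt_const t₀ 0)
    have hux := hu x hx
    simp only [ContinuousLinearMap.add_apply, map_zero, add_zero] at this
    linarith
  -- the vector z vanishes
  set z : V := ν' t₀ + c • ν t₀ + u with hz
  have hzν : g t₀ z (ν t₀) = 0 := by
    have huν : g t₀ u (ν t₀) = 0 := by
      rw [hgsymm]; exact horth t₀ u huW
    simp only [hz, map_add, map_smul, ContinuousLinearMap.add_apply,
      ContinuousLinearMap.smul_apply, smul_eq_mul, e1', hunit t₀, huν]
    ring
  have hzw : ∀ x ∈ W, g t₀ z x = 0 := by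
    intro x hx
    have hνx : g t₀ (ν t₀) x = 0 := horth t₀ x hx
    simp only [hz, map_add, map_smul, ContinuousLinearMap.add_apply,
      ContinuousLinearMap.smul_apply, smul_eq_mul, e2 x hx, hνx]
    ring
  have hzall : ∀ v : V, g t₀ z v = 0 := by
    intro v
    have hv : v ∈ Submodule.span ℝ {ν t₀} ⊔ W := by
      rw [(hsplit t₀).sup_eq_top]; trivial
    obtain ⟨x, hx, y, hy, rfl⟩ := Submodule.mem_sup.mp hv
    obtain ⟨a, rfl⟩ := Submodule.mem_span_singleton.mp hx
    simp [map_add, map_smul, hzν, hzw y hy]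
  have hz0 : z = 0 := by
    by_contra h
    have := hgpos t₀ z h
    rw [hzall z] at this
    exact lt_irrefl _ this
  have hν' : ν' t₀ = -(c • ν t₀) - u := by
    have : ν' t₀ + c • ν t₀ + u = 0 := hz0
    linear_combination (norm := abel) this
  -- main derivative
  have hKν : HasDerivAt (fun t => K t (ν t)) (K' t₀ (ν t₀) + K t₀ (ν' t₀)) t₀ :=
    (hK t₀).clm_apply (hν t₀)
  have hmain : HasDerivAt (fun t => K t (ν t) w)
      ((K' t₀ (ν t₀) + K t₀ (ν' t₀)) w + K t₀ (ν t₀) 0) t₀ :=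
    hKν.clm_apply (hasDerivAt_const t₀ w)
  have : (K' t₀ (ν t₀) + K t₀ (ν' t₀)) w + K t₀ (ν t₀) 0
      = K' t₀ (ν t₀) w - K t₀ u w - (1/2) * g' t₀ (ν t₀) (ν t₀) * K t₀ (ν t₀) w := by
    simp only [ContinuousLinearMap.add_apply, map_zero, add_zero, hν', map_sub, map_neg,
      map_smul, ContinuousLinearMap.sub_apply, ContinuousLinearMap.neg_apply,
      ContinuousLinearMap.smul_apply, smul_eq_mul, hc]
    ring
  rwa [this] at hmain
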